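/- Let F, F₁ be functions on a bounded domain Ω with F₁(z) = F(z) + z, F meromorphic. Then there exist constants c, C, M > 0 (depending only on the diameter of Ω) such that for all z ∈ Ω where both spherical derivatives exceed M, c · F^#(z) ≤ F₁^#(z) ≤ C · F^#(z). Consequently the spherical areas A_sph(F_n, Ω) are uniformly bounded if and only if the A_sph(F_n + z, Ω) are. -/

import Mathlib

/-!
On `Ω ⊆ ball 0 R`, adding `z` moves `F` by at most `R` and `F'` by at most `1` (exactly `1` where
`F` is differentiable; elsewhere both derivatives are `0` by convention). Hence the denominators
`1 + |F|²` and `1 + |F + z|²` agree up to the factor `K = 2 + 2R²`, and each spherical derivative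
is at most `K (· + 2)` of the other. Once both exceed `2` this affine bound becomes linear, and
after squaring and integrating over `Ω`, which has finite area, it transfers bounds on spherical
areas in either direction.
-/

open Complex Set MeasureTheory Real

noncomputable def sphDeriv (F : ℂ → ℂ) (z : ℂ) : ℝ :=
  2 * ‖deriv F z‖ / (1 + ‖F z‖ ^ 2)

lemma sphDeriv_nonneg (F : ℂ → ℂ) (z : ℂ) : 0 ≤ sphDeriv F z := by
  unfold sphDeriv; positivity

lemma norm_deriv_add_id_sub_deriv_le (F : ℂ → ℂ) (z : ℂ) :
    ‖deriv (fun w => F w + w) z - deriv F z‖ ≤ 1 := by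
  by_cases hF : DifferentiableAt ℂ F z
  · simp [deriv_fun_add hF differentiableAt_fun_id]
  · have hF₁ : ¬ DifferentiableAt ℂ (fun w => F w + w) z := fun h => hF <| by
      simpa using h.sub differentiableAt_fun_id
    simp [deriv_zero_of_not_differentiableAt hF, deriv_zero_of_not_differentiableAt hF₁]

lemma one_add_norm_sq_le_of_norm_sub_le {u v : ℂ} {R : ℝ} (h : ‖u - v‖ ≤ R) :
    1 + ‖u‖ ^ 2 ≤ (2 + 2 * R ^ 2) * (1 + ‖v‖ ^ 2) := by
  have huv : ‖u‖ ≤ ‖v‖ + R := by linarith [norm_le_norm_add_norm_sub' u v]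
  nlinarith [norm_nonneg u, norm_nonneg v, sq_nonneg (‖v‖ - R)]

lemma sphDeriv_le_of_norm_sub_le {F G : ℂ → ℂ} {z : ℂ} {R δ : ℝ}
    (hval : ‖G z - F z‖ ≤ R) (hderiv : ‖deriv G z - deriv F z‖ ≤ δ) :
    sphDeriv G z ≤ (2 + 2 * R ^ 2) * (sphDeriv F z + 2 * δ) := by
  have hden := one_add_norm_sq_le_of_norm_sub_le (by rwa [norm_sub_rev] : ‖F z - G z‖ ≤ R)
  have hnum : ‖deriv G z‖ ≤ ‖deriv F z‖ + δ := by
    linarith [norm_le_norm_add_norm_sub' (deriv G z) (deriv F z)]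
  have hFpos : 0 < 1 + ‖F z‖ ^ 2 := by positivity
  have hGpos : 0 < 1 + ‖G z‖ ^ 2 := by positivity
  have hδ : 0 ≤ δ := (norm_nonneg _).trans hderiv
  set K := 2 + 2 * R ^ 2
  calc sphDeriv G z ≤ 2 * (‖deriv F z‖ + δ) / (1 + ‖G z‖ ^ 2) := by
        unfold sphDeriv; gcongr
    _ ≤ K * (2 * (‖deriv F z‖ + δ) / (1 + ‖F z‖ ^ 2)) := by
        rw [mul_div_assoc', div_le_div_iff₀ hGpos hFpos]
        nlinarith [norm_nonneg (deriv F z)]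
    _ ≤ K * (sphDeriv F z + 2 * δ) := by
        unfold sphDeriv
        gcongr
        rw [mul_add, add_div]
        gcongr
        exact div_le_self (by positivity) (by nlinarith)

lemma sphDeriv_add_id_le {R : ℝ} (F : ℂ → ℂ) {z : ℂ} (hz : ‖z‖ ≤ R) :
    sphDeriv (fun w => F w + w) z ≤ (2 + 2 * R ^ 2) * (sphDeriv F z + 2) := by
  simpa using sphDeriv_le_of_norm_sub_le (F := F) (G := fun w => F w + w) (δ := 1)
    (by simpa using hz) (norm_deriv_add_id_sub_deriv_le F z)

lemma sphDeriv_le_add_id {R : ℝ} (F : ℂ → ℂ) {z : ℂ} (hz : ‖z‖ ≤ R) :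
    sphDeriv F z ≤ (2 + 2 * R ^ 2) * (sphDeriv (fun w => F w + w) z + 2) := by
  simpa using sphDeriv_le_of_norm_sub_le (F := fun w => F w + w) (G := F) (δ := 1)
    (by simpa using hz) (by simpa [norm_sub_rev] using norm_deriv_add_id_sub_deriv_le F z)

lemma setLIntegral_ofReal_sq_le_of_le_mul_add_two {α : Type*} [MeasurableSpace α]
    {μ : Measure α} {s : Set α} (hs : MeasurableSet s) {f g : α → ℝ} {K : ℝ}
    (hg : ∀ x ∈ s, 0 ≤ g x) (hgf : ∀ x ∈ s, g x ≤ K * (f x + 2)) :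
    ∫⁻ x in s, ENNReal.ofReal (g x ^ 2) ∂μ ≤
      ENNReal.ofReal (2 * K ^ 2) * ∫⁻ x in s, ENNReal.ofReal (f x ^ 2) ∂μ
        + ENNReal.ofReal (8 * K ^ 2) * μ s := by
  have hpointwise : ∀ x ∈ s, ENNReal.ofReal (g x ^ 2) ≤
      ENNReal.ofReal (2 * K ^ 2) * ENNReal.ofReal (f x ^ 2) + ENNReal.ofReal (8 * K ^ 2) := by
    intro x hx
    have hsq : g x ^ 2 ≤ 2 * K ^ 2 * f x ^ 2 + 8 * K ^ 2 := by
      nlinarith [hg x hx, hgf x hx, sq_nonneg (K * (f x - 2))]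
    rw [← ENNReal.ofReal_mul (by positivity), ← ENNReal.ofReal_add (by positivity) (by positivity)]
    exact ENNReal.ofReal_le_ofReal hsq
  calc ∫⁻ x in s, ENNReal.ofReal (g x ^ 2) ∂μ
      ≤ ∫⁻ x in s, (ENNReal.ofReal (2 * K ^ 2) * ENNReal.ofReal (f x ^ 2)
          + ENNReal.ofReal (8 * K ^ 2)) ∂μ := setLIntegral_mono' hs hpointwise
    _ = _ := by
      rw [lintegral_add_right _ measurable_const, lintegral_const_mul' _ _ ENNReal.ofReal_ne_top,
        setLIntegral_const]

lemma exists_forall_setLIntegral_ofReal_sq_le_of_le_mul_add_two {α ι : Type*}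
    [MeasurableSpace α] {μ : Measure α} {s : Set α} (hs : MeasurableSet s) (hμs : μ s ≠ ⊤)
    {f g : ι → α → ℝ} {K : ℝ} (hg : ∀ i, ∀ x ∈ s, 0 ≤ g i x)
    (hgf : ∀ i, ∀ x ∈ s, g i x ≤ K * (f i x + 2))
    (hf : ∃ B : ℝ, ∀ i, ∫⁻ x in s, ENNReal.ofReal (f i x ^ 2) ∂μ ≤ ENNReal.ofReal B) :
    ∃ B : ℝ, ∀ i, ∫⁻ x in s, ENNReal.ofReal (g i x ^ 2) ∂μ ≤ ENNReal.ofReal B := by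
  obtain ⟨B, hB⟩ := hf
  refine ⟨2 * K ^ 2 * max B 0 + 8 * K ^ 2 * (μ s).toReal, fun i => ?_⟩
  calc ∫⁻ x in s, ENNReal.ofReal (g i x ^ 2) ∂μ
      ≤ ENNReal.ofReal (2 * K ^ 2) * ∫⁻ x in s, ENNReal.ofReal (f i x ^ 2) ∂μ
        + ENNReal.ofReal (8 * K ^ 2) * μ s :=
        setLIntegral_ofReal_sq_le_of_le_mul_add_two hs (hg i) (hgf i)
    _ ≤ ENNReal.ofReal (2 * K ^ 2) * ENNReal.ofReal (max B 0)
        + ENNReal.ofReal (8 * K ^ 2) * ENNReal.ofReal (μ s).toReal := by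
        rw [ENNReal.ofReal_toReal hμs]
        gcongr
        exact (hB i).trans (ENNReal.ofReal_le_ofReal (le_max_left _ _))
    _ = _ := by
        rw [← ENNReal.ofReal_mul (by positivity), ← ENNReal.ofReal_mul (by positivity),
          ← ENNReal.ofReal_add (by positivity) (by positivity)]

theorem spherical_derivative_perturbation_general (R : ℝ) :
    ∃ c C M : ℝ, 0 < c ∧ 0 < C ∧ 0 < M ∧
      ∀ Ω : Set ℂ, IsOpen Ω → Ω ⊆ Metric.ball 0 R →
        ((∀ F : ℂ → ℂ, MeromorphicOn F Ω → ∀ z ∈ Ω,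
            M < sphDeriv F z → M < sphDeriv (fun w => F w + w) z →
            c * sphDeriv F z ≤ sphDeriv (fun w => F w + w) z ∧
              sphDeriv (fun w => F w + w) z ≤ C * sphDeriv F z) ∧
          ∀ F : ℕ → ℂ → ℂ, (∀ n, MeromorphicOn (F n) Ω) →
            ((∃ B : ℝ, ∀ n, ∫⁻ z in Ω, ENNReal.ofReal (sphDeriv (F n) z ^ 2)
                ≤ ENNReal.ofReal B) ↔
              (∃ B : ℝ, ∀ n, ∫⁻ z in Ω, ENNReal.ofReal (sphDeriv (fun w => F n w + w) z ^ 2)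
                ≤ ENNReal.ofReal B))) := by
  set K := 2 + 2 * R ^ 2
  refine ⟨(2 * K)⁻¹, 2 * K, 2, by positivity, by positivity, two_pos, fun Ω hΩ hΩR => ?_⟩
  have hnorm : ∀ z ∈ Ω, ‖z‖ ≤ R := fun z hz => (mem_ball_zero_iff.mp (hΩR hz)).le
  have hvol : volume Ω ≠ ⊤ := ((measure_mono hΩR).trans_lt measure_ball_lt_top).ne
  refine ⟨fun F _ z hz hF hF₁ => ⟨?_, ?_⟩, fun F _ => ⟨?_, ?_⟩⟩
  · rw [inv_mul_le_iff₀ (by positivity)]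
    nlinarith [sphDeriv_le_add_id F (hnorm z hz)]
  · nlinarith [sphDeriv_add_id_le F (hnorm z hz)]
  · exact exists_forall_setLIntegral_ofReal_sq_le_of_le_mul_add_two hΩ.measurableSet hvol
      (fun _ _ _ => sphDeriv_nonneg _ _) (fun n z hz => sphDeriv_add_id_le (F n) (hnorm z hz))
  · exact exists_forall_setLIntegral_ofReal_sq_le_of_le_mul_add_two hΩ.measurableSet hvol
      (fun _ _ _ => sphDeriv_nonneg _ _) (fun n z hz => sphDeriv_le_add_id (F n) (hnorm z hz))

/-- On a bounded domain `Ω`, the spherical derivatives of `F` and of `F₁ = F + z` are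
comparable whenever both are large, with constants depending only on the size of `Ω`.
Consequently a sequence `Fₙ` has uniformly bounded spherical areas iff `Fₙ + z` does. -/
theorem spherical_derivative_perturbation (R : ℝ) (hR : 0 < R) :
    ∃ c C M : ℝ, 0 < c ∧ 0 < C ∧ 0 < M ∧
      ∀ Ω : Set ℂ, IsOpen Ω → Ω ⊆ Metric.ball 0 R →
        ((∀ F : ℂ → ℂ, MeromorphicOn F Ω → ∀ z ∈ Ω,
            M < sphDeriv F z → M < sphDeriv (fun w => F w + w) z →
            c * sphDeriv F z ≤ sphDeriv (fun w => F w + w) z ∧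
              sphDeriv (fun w => F w + w) z ≤ C * sphDeriv F z) ∧
          ∀ F : ℕ → ℂ → ℂ, (∀ n, MeromorphicOn (F n) Ω) →
            ((∃ B : ℝ, ∀ n, ∫⁻ z in Ω, ENNReal.ofReal (sphDeriv (F n) z ^ 2)
                ≤ ENNReal.ofReal B) ↔
              (∃ B : ℝ, ∀ n, ∫⁻ z in Ω, ENNReal.ofReal (sphDeriv (fun w => F n w + w) z ^ 2)
                ≤ ENNReal.ofReal B))) :=
  spherical_derivative_perturbation_general R
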